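/- For all real α, x ∈ ℝ and t > 0, ∂/∂t H_α(x,t) = −(α(α−1)/2) · H_{α−2}(x,t). -/

import Mathlib

/-!
Put `c = x²/2`. The factor `e^{x²/(4t)}` cancels the Gaussian factor of `U(-α-1/2, x/√t)`, so
`H_α(x,t) = A(α) f_{1/2,α/2}(t) + B(α) x f_{3/2,(α-1)/2}(t)` with `f_{b,p}(s) = s^p M(-p, b, c/s)`.
Differentiating the series of `f_{b,p}` termwise, `(a)_n (a + n) = a (a + 1)_n` gives
`f_{b,p}' = p f_{b,p-1}`; and `Γ(s + 1) = s Γ(s)`, together with the sign change of `cos` and `sin`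
under a shift by `π`, gives `A(α) = -(α - 1) A(α - 2)` and `B(α) = -α B(α - 2)`.
-/

open Real MeasureTheory

/-- Kummer's confluent hypergeometric function ₁F₁(a;b;z). -/
noncomputable def kummerM (a b z : ℝ) : ℝ :=
  ∑' n : ℕ, ((ascPochhammer ℝ n).eval a * z ^ n) / ((ascPochhammer ℝ n).eval b * (n.factorial : ℝ))

/-- The parabolic cylinder function `U(b, z)`, defined via Kummer functions
(Abramowitz–Stegun 19.12.1 with `b = -α - 1/2`). -/
noncomputable def pcU (b z : ℝ) : ℝ :=
  let α : ℝ := -b - 1/2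
  (1 / Real.sqrt π) * (2 : ℝ) ^ (α / 2) * Real.exp (-z ^ 2 / 4) *
    (Real.cos (π * α / 2) * Real.Gamma ((α + 1) / 2) * kummerM (-α / 2) (1/2) (z ^ 2 / 2) +
      Real.sqrt 2 * z * Real.sin (π * α / 2) * Real.Gamma (α / 2 + 1) *
        kummerM (1/2 - α / 2) (3/2) (z ^ 2 / 2))

/-- Whittaker's form `D_a(z) = U(-a - 1/2, z)`. -/
noncomputable def pcD (a z : ℝ) : ℝ := pcU (-a - 1/2) z

/-- The power-normalised parabolic cylinder function
`H_α(x,t) = t^{α/2} e^{x²/(4t)} D_α(x/√t)`. -/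
noncomputable def Hfrac (α x t : ℝ) : ℝ :=
  t ^ (α / 2) * Real.exp (x ^ 2 / (4 * t)) * pcD α (x / Real.sqrt t)

open Filter Set

noncomputable section

def kummerCoeff (a b : ℝ) (n : ℕ) : ℝ :=
  (ascPochhammer ℝ n).eval a / ((ascPochhammer ℝ n).eval b * n.factorial)

lemma kummerM_eq_tsum (a b z : ℝ) : kummerM a b z = ∑' n, kummerCoeff a b n * z ^ n := by
  simp only [kummerM, kummerCoeff, div_mul_eq_mul_div]

lemma kummerCoeff_mul_add (a b : ℝ) (n : ℕ) :
    kummerCoeff a b n * (a + n) = a * kummerCoeff (a + 1) b n := by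
  have hleft : (ascPochhammer ℝ (n + 1)).eval a = a * (ascPochhammer ℝ n).eval (a + 1) := by
    simp [ascPochhammer_succ_left]
  rw [kummerCoeff, kummerCoeff, div_mul_eq_mul_div, ← ascPochhammer_succ_eval, hleft,
    mul_div_assoc]

lemma kummerCoeff_succ_mul_pow {b : ℝ} (hb : 0 < b) (a z : ℝ) (n : ℕ) :
    kummerCoeff a b (n + 1) * z ^ (n + 1) =
      kummerCoeff a b n * z ^ n * ((a + n) * z / ((b + n) * (n + 1))) := by
  have hpoch : (ascPochhammer ℝ n).eval b ≠ 0 := (ascPochhammer_pos n b hb).ne'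
  have hbn : b + n ≠ 0 := by positivity
  rw [kummerCoeff, kummerCoeff, ascPochhammer_succ_eval, ascPochhammer_succ_eval,
    Nat.factorial_succ]
  push_cast
  field_simp
  ring

lemma summable_kummerCoeff_mul_pow {b : ℝ} (hb : 0 < b) (a z : ℝ) :
    Summable fun n => kummerCoeff a b n * z ^ n := by
  refine summable_of_ratio_norm_eventually_le (r := 1 / 2) (by norm_num) ?_
  filter_upwards [eventually_ge_atTop ⌈|a|⌉₊, eventually_ge_atTop ⌈4 * |z|⌉₊] with n ha hz
  replace ha : |a| ≤ n := Nat.ceil_le.mp ha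
  replace hz : 4 * |z| ≤ n := Nat.ceil_le.mp hz
  have hden : (0 : ℝ) < (b + n) * (n + 1) := by positivity
  have hnum : |a + n| ≤ 2 * n := (abs_add_le a n).trans (by rw [Nat.abs_cast]; linarith)
  have hratio : |(a + n) * z / ((b + n) * (n + 1))| ≤ 1 / 2 := by
    rw [abs_div, abs_mul, abs_of_pos hden, div_le_iff₀ hden]
    calc |a + n| * |z| ≤ 2 * n * |z| := by gcongr
      _ ≤ 1 / 2 * ((b + n) * (n + 1)) := by nlinarith [abs_nonneg z]
  rw [kummerCoeff_succ_mul_pow hb, norm_mul, mul_comm (1 / 2 : ℝ)]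
  exact mul_le_mul_of_nonneg_left hratio (norm_nonneg _)

lemma rpow_le_rpow_add_rpow {l y h : ℝ} (e : ℝ) (hl : 0 < l) (hly : l ≤ y) (hyh : y ≤ h) :
    y ^ e ≤ l ^ e + h ^ e := by
  rcases le_or_gt 0 e with he | he
  · linarith [Real.rpow_le_rpow (hl.le.trans hly) hyh he, Real.rpow_nonneg hl.le e]
  · linarith [Real.rpow_le_rpow_of_nonpos hl hly he.le,
      Real.rpow_nonneg (hl.le.trans (hly.trans hyh)) e]

def scaledKummer (b c p s : ℝ) : ℝ := s ^ p * kummerM (-p) b (c / s)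

def scaledKummerTerm (b c p : ℝ) (n : ℕ) (s : ℝ) : ℝ :=
  kummerCoeff (-p) b n * c ^ n * s ^ (p - n)

section scaledKummer

variable {b c p s t : ℝ} {n : ℕ}

lemma scaledKummerTerm_eq (hs : 0 < s) :
    scaledKummerTerm b c p n s = s ^ p * (kummerCoeff (-p) b n * (c / s) ^ n) := by
  rw [scaledKummerTerm, Real.rpow_sub_natCast hs.ne', div_pow]
  ring

lemma scaledKummer_eq_tsum (hs : 0 < s) :
    scaledKummer b c p s = ∑' n, scaledKummerTerm b c p n s := by
  simp only [scaledKummerTerm_eq hs, tsum_mul_left, scaledKummer, kummerM_eq_tsum]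

lemma summable_scaledKummerTerm (hb : 0 < b) (hs : 0 < s) :
    Summable fun n => scaledKummerTerm b c p n s := by
  simp only [scaledKummerTerm_eq hs]
  exact (summable_kummerCoeff_mul_pow hb _ _).mul_left _

lemma hasDerivAt_scaledKummerTerm (hs : 0 < s) :
    HasDerivAt (scaledKummerTerm b c p n) (p * scaledKummerTerm b c (p - 1) n s) s := by
  refine ((Real.hasDerivAt_rpow_const (p := p - n) (Or.inl hs.ne')).const_mul
    (kummerCoeff (-p) b n * c ^ n)).congr_deriv ?_
  rw [scaledKummerTerm, show -(p - 1) = -p + 1 by ring, show p - 1 - n = p - n - 1 by ring]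
  linear_combination -(c ^ n * s ^ (p - n - 1)) * kummerCoeff_mul_add (-p) b n

lemma abs_scaledKummerTerm_le {l h : ℝ} (hl : 0 < l) (hls : l ≤ s) (hsh : s ≤ h) :
    |scaledKummerTerm b c p n s| ≤
      |scaledKummerTerm b c p n l| + |scaledKummerTerm b c p n h| := by
  have habs : ∀ y, 0 < y → |scaledKummerTerm b c p n y| =
      |kummerCoeff (-p) b n * c ^ n| * y ^ (p - n) := fun y hy => by
    rw [scaledKummerTerm, abs_mul, abs_of_pos (Real.rpow_pos_of_pos hy _)]
  rw [habs s (hl.trans_le hls), habs l hl, habs h (hl.trans_le (hls.trans hsh)), ← mul_add]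
  exact mul_le_mul_of_nonneg_left (rpow_le_rpow_add_rpow _ hl hls hsh) (abs_nonneg _)

theorem hasDerivAt_scaledKummer (hb : 0 < b) (ht : 0 < t) :
    HasDerivAt (scaledKummer b c p) (p * scaledKummer b c (p - 1) t) t := by
  have hmem : t ∈ Ioo (t / 2) (t + 1) := ⟨by linarith, by linarith⟩
  have hpos : ∀ y ∈ Ioo (t / 2) (t + 1), 0 < y := fun y hy => (half_pos ht).trans hy.1
  have hbound : Summable fun n => |p| *
      (|scaledKummerTerm b c (p - 1) n (t / 2)| + |scaledKummerTerm b c (p - 1) n (t + 1)|) :=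
    (((summable_scaledKummerTerm hb (half_pos ht)).abs).add
      (summable_scaledKummerTerm hb (by linarith)).abs).mul_left _
  have hsum := hasDerivAt_tsum_of_isPreconnected hbound isOpen_Ioo
    (convex_Ioo _ _).isPreconnected (fun n y hy => hasDerivAt_scaledKummerTerm (hpos y hy))
    (fun n y hy => by
      rw [norm_mul, Real.norm_eq_abs, Real.norm_eq_abs]
      exact mul_le_mul_of_nonneg_left
        (abs_scaledKummerTerm_le (half_pos ht) hy.1.le hy.2.le) (abs_nonneg p))
    hmem (summable_scaledKummerTerm hb ht) hmem
  rw [tsum_mul_left, ← scaledKummer_eq_tsum ht] at hsum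
  refine hsum.congr_of_eventuallyEq ?_
  filter_upwards [Ioi_mem_nhds ht] with s hs using scaledKummer_eq_tsum hs

end scaledKummer

def pcEvenCoeff (α : ℝ) : ℝ :=
  2 ^ (α / 2) / √π * Real.cos (π * α / 2) * Real.Gamma ((α + 1) / 2)

def pcOddCoeff (α : ℝ) : ℝ :=
  2 ^ (α / 2) / √π * √2 * Real.sin (π * α / 2) * Real.Gamma (α / 2 + 1)

lemma two_rpow_half_sub_one (α : ℝ) : (2 : ℝ) ^ ((α - 2) / 2) = 2 ^ (α / 2) / 2 := by
  rw [show (α - 2) / 2 = α / 2 - 1 by ring, Real.rpow_sub two_pos, Real.rpow_one]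

lemma pcEvenCoeff_eq (α : ℝ) : pcEvenCoeff α = -(α - 1) * pcEvenCoeff (α - 2) := by
  have hcos : Real.cos (π * (α - 2) / 2) = -Real.cos (π * α / 2) := by
    rw [show π * (α - 2) / 2 = π * α / 2 - π by ring, Real.cos_sub_pi]
  have hGamma : Real.cos (π * α / 2) * Real.Gamma ((α + 1) / 2) =
      Real.cos (π * α / 2) * ((α - 1) / 2 * Real.Gamma ((α - 1) / 2)) := by
    rcases eq_or_ne α 1 with rfl | hα
    · simp [Real.cos_pi_div_two]
    · rw [show (α + 1) / 2 = (α - 1) / 2 + 1 by ring, Real.Gamma_add_one]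
      contrapose! hα
      linarith
  rw [pcEvenCoeff, pcEvenCoeff, two_rpow_half_sub_one, hcos,
    show (α - 2 + 1) / 2 = (α - 1) / 2 by ring]
  linear_combination 2 ^ (α / 2) / √π * hGamma

lemma pcOddCoeff_eq (α : ℝ) : pcOddCoeff α = -α * pcOddCoeff (α - 2) := by
  have hsin : Real.sin (π * (α - 2) / 2) = -Real.sin (π * α / 2) := by
    rw [show π * (α - 2) / 2 = π * α / 2 - π by ring, Real.sin_sub_pi]
  have hGamma : Real.sin (π * α / 2) * Real.Gamma (α / 2 + 1) =
      Real.sin (π * α / 2) * (α / 2 * Real.Gamma (α / 2)) := by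
    rcases eq_or_ne α 0 with rfl | hα
    · simp
    · rw [Real.Gamma_add_one]
      contrapose! hα
      linarith
  rw [pcOddCoeff, pcOddCoeff, two_rpow_half_sub_one, hsin,
    show (α - 2) / 2 + 1 = α / 2 by ring]
  linear_combination 2 ^ (α / 2) / √π * √2 * hGamma

lemma Hfrac_eq (α x : ℝ) {t : ℝ} (ht : 0 < t) :
    Hfrac α x t = pcEvenCoeff α * scaledKummer (1 / 2) (x ^ 2 / 2) (α / 2) t +
      pcOddCoeff α * x * scaledKummer (3 / 2) (x ^ 2 / 2) ((α - 1) / 2) t := by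
  have hz : (x / √t) ^ 2 / 2 = x ^ 2 / 2 / t := by
    rw [div_pow, Real.sq_sqrt ht.le]
    ring
  have hexp : Real.exp (x ^ 2 / (4 * t)) * Real.exp (-(x / √t) ^ 2 / 4) = 1 := by
    rw [← Real.exp_add, div_pow, Real.sq_sqrt ht.le, ← Real.exp_zero]
    congr 1
    field_simp
    ring
  have hpow : t ^ (α / 2) * (x / √t) = x * t ^ ((α - 1) / 2) := by
    rw [Real.sqrt_eq_rpow, show (α - 1) / 2 = α / 2 - 1 / 2 by ring, Real.rpow_sub ht]
    ring
  simp only [Hfrac, pcD, pcU, scaledKummer, pcEvenCoeff, pcOddCoeff,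
    show -(-α - 1 / 2) - 1 / 2 = α by ring, show -(α / 2) = -α / 2 by ring,
    show -((α - 1) / 2) = 1 / 2 - α / 2 by ring, hz]
  linear_combination (2 ^ (α / 2) / √π * (Real.cos (π * α / 2) * Real.Gamma ((α + 1) / 2) *
      kummerM (-α / 2) (1 / 2) (x ^ 2 / 2 / t) * t ^ (α / 2) + √2 * Real.sin (π * α / 2) *
      Real.Gamma (α / 2 + 1) * kummerM (1 / 2 - α / 2) (3 / 2) (x ^ 2 / 2 / t) *
      (t ^ (α / 2) * (x / √t)))) * hexp +
    (2 ^ (α / 2) / √π * √2 * Real.sin (π * α / 2) * Real.Gamma (α / 2 + 1) *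
      kummerM (1 / 2 - α / 2) (3 / 2) (x ^ 2 / 2 / t)) * hpow

end

theorem stmt11 (α x t : ℝ) (ht : 0 < t) :
    deriv (fun s : ℝ => Hfrac α x s) t = -(α * (α - 1) / 2) * Hfrac (α - 2) x t := by
  have hderiv : HasDerivAt (fun s => Hfrac α x s)
      (pcEvenCoeff α * (α / 2 * scaledKummer (1 / 2) (x ^ 2 / 2) (α / 2 - 1) t) +
        pcOddCoeff α * x *
          ((α - 1) / 2 * scaledKummer (3 / 2) (x ^ 2 / 2) ((α - 1) / 2 - 1) t)) t := by
    refine (((hasDerivAt_scaledKummer (by norm_num) ht).const_mul _).add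
      ((hasDerivAt_scaledKummer (by norm_num) ht).const_mul _)).congr_of_eventuallyEq ?_
    filter_upwards [Ioi_mem_nhds ht] with s hs using Hfrac_eq α x hs
  rw [hderiv.deriv, Hfrac_eq (α - 2) x ht, pcEvenCoeff_eq, pcOddCoeff_eq,
    show α / 2 - 1 = (α - 2) / 2 by ring, show (α - 1) / 2 - 1 = (α - 2 - 1) / 2 by ring]
  ring
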